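/- Let W_5 be the wheel graph on {1,…,6}, let f(x) = ∑_{{i,j}∈E} x_i x_j, and let T(W_5) be the polytope defined by the McCormick inequalities for every edge together with the inequalities y_{ij} + y_{ik} + y_{jk} ≥ x_i + x_j + x_k − 1 for every triangle of W_5. Then the point (x, z) with x = (1/3, 1/3, 1/3, 1/3, 1/3, 2/3) and z = 5/6 belongs to π[f](T(W_5)) but not to X(f); in particular π[f](T(W_5)) ≠ X(f). -/
import Mathlib


open Finset

/-- McCormick inequalities for an edge with vertex values `a`, `b` and product variable `v`. -/
def mc (a b v : ℝ) : Prop := 0 ≤ v ∧ v ≤ a ∧ v ≤ b ∧ a + b - v ≤ 1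

/-- Membership in `T(W_5)`: the McCormick inequalities for every edge of the 5-wheel
together with the triangle inequalities for every triangle of the 5-wheel. -/
def memTW5 (x : ℕ → ℝ) (y : ℕ → ℕ → ℝ) : Prop :=
  (∀ i ∈ Finset.Icc 1 6, 0 ≤ x i ∧ x i ≤ 1) ∧
  mc (x 1) (x 2) (y 1 2) ∧ mc (x 2) (x 3) (y 2 3) ∧ mc (x 3) (x 4) (y 3 4) ∧
  mc (x 4) (x 5) (y 4 5) ∧ mc (x 5) (x 1) (y 5 1) ∧
  mc (x 1) (x 6) (y 1 6) ∧ mc (x 2) (x 6) (y 2 6) ∧ mc (x 3) (x 6) (y 3 6) ∧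
  mc (x 4) (x 6) (y 4 6) ∧ mc (x 5) (x 6) (y 5 6) ∧
  x 1 + x 2 + x 6 - 1 ≤ y 1 2 + y 1 6 + y 2 6 ∧
  x 2 + x 3 + x 6 - 1 ≤ y 2 3 + y 2 6 + y 3 6 ∧
  x 3 + x 4 + x 6 - 1 ≤ y 3 4 + y 3 6 + y 4 6 ∧
  x 4 + x 5 + x 6 - 1 ≤ y 4 5 + y 4 6 + y 5 6 ∧
  x 5 + x 1 + x 6 - 1 ≤ y 5 1 + y 5 6 + y 1 6

/-- The quadratic function `f` of the 5-wheel. -/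
def fW5 (x : ℕ → ℝ) : ℝ :=
  x 1 * x 2 + x 2 * x 3 + x 3 * x 4 + x 4 * x 5 + x 5 * x 1 +
    x 1 * x 6 + x 2 * x 6 + x 3 * x 6 + x 4 * x 6 + x 5 * x 6

/-- `X(f)` for the 5-wheel. -/
noncomputable def XfW5 : Set ((ℕ → ℝ) × ℝ) :=
  convexHull ℝ {p : (ℕ → ℝ) × ℝ |
    (∀ i ∈ Finset.Icc 1 6, 0 ≤ p.1 i ∧ p.1 i ≤ 1) ∧
    (∀ i ∉ Finset.Icc 1 6, p.1 i = 0) ∧ p.2 = fW5 p.1}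

/-- `π[f](T(W_5))`. -/
def projTW5 : Set ((ℕ → ℝ) × ℝ) :=
  {p | (∀ i ∉ Finset.Icc 1 6, p.1 i = 0) ∧
    ∃ y : ℕ → ℕ → ℝ, memTW5 p.1 y ∧
      p.2 = y 1 2 + y 2 3 + y 3 4 + y 4 5 + y 5 1 +
        y 1 6 + y 2 6 + y 3 6 + y 4 6 + y 5 6}

/-- The point `x = (1/3, 1/3, 1/3, 1/3, 1/3, 2/3)`. -/
noncomputable def xW5pt : ℕ → ℝ := fun i =>
  if i = 6 then 2/3 else if 1 ≤ i ∧ i ≤ 5 then 1/3 else 0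

lemma c5_ineq (x1 x2 x3 x4 x5 : ℝ) (a1:0≤x1)(a2:0≤x2)(a3:0≤x3)(a4:0≤x4)(a5:0≤x5)
  (b1:x1≤1)(b2:x2≤1)(b3:x3≤1)(b4:x4≤1)(b5:x5≤1) :
  x1+x2+x3+x4+x5 - 2 ≤ x1*x2+x2*x3+x3*x4+x4*x5+x5*x1 := by
  nlinarith [mul_nonneg a1 a2, mul_nonneg a2 a3, mul_nonneg a3 a4, mul_nonneg a4 a5, mul_nonneg a5 a1,
    mul_nonneg (sub_nonneg.2 b1) (sub_nonneg.2 b2), mul_nonneg (sub_nonneg.2 b2) (sub_nonneg.2 b3),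
    mul_nonneg (sub_nonneg.2 b3) (sub_nonneg.2 b4), mul_nonneg (sub_nonneg.2 b4) (sub_nonneg.2 b5),
    mul_nonneg (sub_nonneg.2 b5) (sub_nonneg.2 b1),
    mul_nonneg a1 (sub_nonneg.2 b2), mul_nonneg a2 (sub_nonneg.2 b3), mul_nonneg a3 (sub_nonneg.2 b4),
    mul_nonneg a4 (sub_nonneg.2 b5), mul_nonneg a5 (sub_nonneg.2 b1),
    mul_nonneg a2 (sub_nonneg.2 b1), mul_nonneg a3 (sub_nonneg.2 b2), mul_nonneg a4 (sub_nonneg.2 b3),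
    mul_nonneg a5 (sub_nonneg.2 b4), mul_nonneg a1 (sub_nonneg.2 b5)]

/-- The valid inequality `f(x) ≥ x1+...+x5+2x6-2` on the cube. -/
lemma wheel_lb (x : ℕ → ℝ) (hx : ∀ i ∈ Finset.Icc 1 6, 0 ≤ x i ∧ x i ≤ 1) :
    x 1 + x 2 + x 3 + x 4 + x 5 + 2 * x 6 - 2 ≤ fW5 x := by
  have h1 := hx 1 (by decide); have h2 := hx 2 (by decide); have h3 := hx 3 (by decide)
  have h4 := hx 4 (by decide); have h5 := hx 5 (by decide); have h6 := hx 6 (by decide)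
  have key := c5_ineq (x 1) (x 2) (x 3) (x 4) (x 5) h1.1 h2.1 h3.1 h4.1 h5.1 h1.2 h2.2 h3.2 h4.2 h5.2
  -- fW5 x - (∑ + 2x6 - 2) = cycle + (1 - x6)(2 - ∑)  where ∑ = x1+..+x5
  rcases le_or_gt (x 1 + x 2 + x 3 + x 4 + x 5) 2 with hs | hs
  · have hc : 0 ≤ x 1 * x 2 + x 2 * x 3 + x 3 * x 4 + x 4 * x 5 + x 5 * x 1 := by
      have := mul_nonneg h1.1 h2.1; have := mul_nonneg h2.1 h3.1; have := mul_nonneg h3.1 h4.1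
      have := mul_nonneg h4.1 h5.1; have := mul_nonneg h5.1 h1.1; nlinarith
    have hu : 0 ≤ (1 - x 6) * (2 - (x 1 + x 2 + x 3 + x 4 + x 5)) :=
      mul_nonneg (by linarith [h6.2]) (by linarith)
    unfold fW5; nlinarith
  · have hu : (1 - x 6) * (x 1 + x 2 + x 3 + x 4 + x 5 - 2) ≤
        x 1 + x 2 + x 3 + x 4 + x 5 - 2 := by
      nlinarith [h6.1, h6.2]
    unfold fW5; nlinarith

theorem triangle_relaxation_too_weak_for_W5 :
    (xW5pt, (5/6 : ℝ)) ∈ projTW5 ∧ (xW5pt, (5/6 : ℝ)) ∉ XfW5 ∧ projTW5 ≠ XfW5 := by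
  have hx1 : xW5pt 1 = 1/3 := by norm_num [xW5pt]
  have hx2 : xW5pt 2 = 1/3 := by norm_num [xW5pt]
  have hx3 : xW5pt 3 = 1/3 := by norm_num [xW5pt]
  have hx4 : xW5pt 4 = 1/3 := by norm_num [xW5pt]
  have hx5 : xW5pt 5 = 1/3 := by norm_num [xW5pt]
  have hx6 : xW5pt 6 = 2/3 := by norm_num [xW5pt]
  have hmem : (xW5pt, (5/6 : ℝ)) ∈ projTW5 := by
    refine ⟨?_, fun i j => if j = 6 then 1/6 else 0, ?_, by norm_num⟩
    · intro i hi
      simp only [Finset.mem_Icc, not_and_or, not_le] at hi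
      unfold xW5pt
      have h6 : i ≠ 6 := by omega
      have h5 : ¬ (1 ≤ i ∧ i ≤ 5) := by omega
      simp [h6, h5]
    · unfold memTW5 mc
      refine ⟨?_, ?_⟩
      · intro i hi
        simp only [Finset.mem_Icc] at hi
        obtain ⟨hl, hr⟩ := hi
        unfold xW5pt; interval_cases i <;> norm_num
      · norm_num [hx1, hx2, hx3, hx4, hx5, hx6]
  have hnot : (xW5pt, (5/6 : ℝ)) ∉ XfW5 := by
    intro h
    have hsub : XfW5 ⊆ {p : (ℕ → ℝ) × ℝ |
        p.1 1 + p.1 2 + p.1 3 + p.1 4 + p.1 5 + 2 * p.1 6 - 2 ≤ p.2} := by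
      apply convexHull_min
      · rintro ⟨x, z⟩ ⟨hbox, -, hz⟩
        simp only [Set.mem_setOf_eq] at *
        rw [hz]
        exact wheel_lb x hbox
      · intro p hp q hq a b ha hb hab
        simp only [Set.mem_setOf_eq] at *
        have := add_le_add (mul_le_mul_of_nonneg_left hp ha) (mul_le_mul_of_nonneg_left hq hb)
        simp only [Prod.fst_add, Prod.snd_add, Prod.smul_fst, Prod.smul_snd, smul_eq_mul,
          Pi.add_apply, Pi.smul_apply]
        nlinarith
    have := hsub h
    simp only [Set.mem_setOf_eq, hx1, hx2, hx3, hx4, hx5, hx6] at this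
    norm_num at this
  exact ⟨hmem, hnot, fun h => hnot (h ▸ hmem)⟩
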